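/- Let A be an asymptotic basis for N of order at most h with 0 ∈ A∖X, X ⊆ A finite, μ = diam(X ∪ {0}). Then for every sufficiently large n there exists a ∈ h(A∖X) with |n − a| ≤ hμ; consequently the lower asymptotic density of h(A∖X) is at least 1/(2hμ + 1). -/
import Mathlib


open Filter Set Pointwise

/-- `nfold A h` is the `h`-fold sumset of `A` (sums of exactly `h` elements). -/
def nfold (A : Set ℤ) : ℕ → Set ℤ
  | 0 => {0}
  | n + 1 => A + nfold A n

/-- The `h`-fold sumset of `A` contains all sufficiently large naturals. -/
def CoversAt (A : Set ℤ) (h : ℕ) : Prop :=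
  ∀ᶠ m : ℕ in Filter.atTop, (m : ℤ) ∈ nfold A h

/-- `A` is an asymptotic basis for ℕ. -/
def IsAsympBasis (A : Set ℤ) : Prop := ∃ h, CoversAt A h

/-- The order `G(A)` of an asymptotic basis. -/
noncomputable def basisOrder (A : Set ℤ) : ℕ := sInf {h | CoversAt A h}

/-- Lower asymptotic density of a set of integers. -/
noncomputable def lowerDensity (S : Set ℤ) : ℝ :=
  Filter.liminf (fun n : ℕ => ((S ∩ Set.Icc 1 (n : ℤ)).ncard : ℝ) / n) Filter.atTop

/-- Diameter of a set of integers. -/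
noncomputable def diam (S : Set ℤ) : ℤ := sSup S - sInf S

/-- `h`-fold sumset in `ZMod n`. -/
def nfoldZ {n : ℕ} (A : Set (ZMod n)) : ℕ → Set (ZMod n)
  | 0 => {0}
  | t + 1 => A + nfoldZ A t

lemma zero_mem_nfold {A : Set ℤ} (h0 : (0:ℤ) ∈ A) : ∀ n, (0:ℤ) ∈ nfold A n
  | 0 => rfl
  | n + 1 => ⟨0, h0, 0, zero_mem_nfold h0 n, by ring⟩

lemma coversAt_mono {A : Set ℤ} (h0 : (0:ℤ) ∈ A) {k l : ℕ} (hkl : k ≤ l)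
    (hk : CoversAt A k) : CoversAt A l := by
  induction l, hkl using Nat.le_induction with
  | base => exact hk
  | succ l _ ih => exact ih.mono fun m hm => ⟨0, h0, m, hm, by ring⟩

lemma approx_nfold {A X : Set ℤ} {μ : ℤ} (h0 : (0:ℤ) ∈ A \ X)
    (hX : ∀ x ∈ X, |x| ≤ μ) (hμ0 : 0 ≤ μ) :
    ∀ t : ℕ, ∀ m ∈ nfold A t, ∃ a ∈ nfold (A \ X) t, |m - a| ≤ t * μ := by
  intro t
  induction t with
  | zero =>
      intro m hm
      refine ⟨0, rfl, ?_⟩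
      simp only [nfold, mem_singleton_iff] at hm
      simp [hm]
  | succ t ih =>
      rintro m ⟨x, hx, y, hy, rfl⟩
      obtain ⟨a, ha, hay⟩ := ih y hy
      rw [abs_le] at hay
      by_cases hxX : x ∈ X
      · refine ⟨a, ⟨0, h0, a, ha, by ring⟩, ?_⟩
        have hxb := hX x hxX
        rw [abs_le] at hxb ⊢
        push_cast
        constructor <;> linarith [hxb.1, hxb.2]
      · refine ⟨x + a, ⟨x, ⟨hx, hxX⟩, a, ha, rfl⟩, ?_⟩
        rw [abs_le]
        push_cast
        constructor <;> [linarith [hay.1]; linarith [hay.2]]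

theorem stmt4 (A : Set ℤ) (hfin : (A ∩ {x | x < 0}).Finite) (h : ℕ)
    (hA : IsAsympBasis A) (hord : basisOrder A ≤ h)
    (X : Set ℤ) (hXfin : X.Finite) (hXA : X ⊆ A)
    (h0 : (0 : ℤ) ∈ A \ X) (hAX : IsAsympBasis (A \ X))
    (μ : ℤ) (hμ : μ = diam (X ∪ {0})) :
    (∀ᶠ n : ℕ in Filter.atTop, ∃ a ∈ nfold (A \ X) h, |(n : ℤ) - a| ≤ h * μ) ∧
      1 / (2 * h * (μ : ℝ) + 1) ≤ lowerDensity (nfold (A \ X) h) := by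
  -- basic facts about μ
  have hXfin' : (X ∪ {0} : Set ℤ).Finite := hXfin.union (finite_singleton 0)
  have h0mem : (0:ℤ) ∈ X ∪ {0} := Or.inr rfl
  have hbdd : BddAbove (X ∪ {0} : Set ℤ) := hXfin'.bddAbove
  have hbddb : BddBelow (X ∪ {0} : Set ℤ) := hXfin'.bddBelow
  have hsup : (0:ℤ) ≤ sSup (X ∪ {0}) := le_csSup hbdd h0mem
  have hinf : sInf (X ∪ {0} : Set ℤ) ≤ 0 := csInf_le hbddb h0mem
  have hμ0 : 0 ≤ μ := by rw [hμ, diam]; linarith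
  have hXμ : ∀ x ∈ X, |x| ≤ μ := by
    intro x hx
    have h1 : sInf (X ∪ {0} : Set ℤ) ≤ x := csInf_le hbddb (Or.inl hx)
    have h2 : x ≤ sSup (X ∪ {0} : Set ℤ) := le_csSup hbdd (Or.inl hx)
    rw [hμ, diam, abs_le]
    constructor <;> linarith
  -- CoversAt A h
  have hcov : CoversAt A h := coversAt_mono h0.1 hord (Nat.sInf_mem hA)
  set S := nfold (A \ X) h with hS
  have part1 : ∀ᶠ n : ℕ in atTop, ∃ a ∈ S, |(n : ℤ) - a| ≤ h * μ := by
    filter_upwards [hcov] with n hn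
    exact approx_nfold h0 hXμ hμ0 h _ hn
  refine ⟨part1, ?_⟩
  -- part 2 : density
  set M : ℕ := ((h : ℤ) * μ).toNat with hMdef
  have hMcast : (M : ℤ) = (h : ℤ) * μ :=
    Int.toNat_of_nonneg (mul_nonneg (Int.natCast_nonneg h) hμ0)
  rw [eventually_atTop] at part1
  obtain ⟨n0, hn0⟩ := part1
  set n1 : ℕ := max n0 (M + 1) with hn1def
  -- choice function
  have hch : ∀ n : ℕ, ∃ a : ℤ, n1 ≤ n → a ∈ S ∧ |(n:ℤ) - a| ≤ (M:ℤ) := by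
    intro n
    by_cases hn : n1 ≤ n
    · obtain ⟨a, ha, hab⟩ := hn0 n (le_trans (le_max_left _ _) hn)
      exact ⟨a, fun _ => ⟨ha, by rw [hMcast]; exact hab⟩⟩
    · exact ⟨0, fun hc => absurd hc hn⟩
  choose f hf using hch
  -- counting estimate
  have key : ∀ N : ℕ, n1 ≤ N →
      N + 1 - n1 ≤ (2*M+1) * ((S ∩ Set.Icc 1 (N:ℤ)).ncard + M) := by
    intro N hN
    have hSfin : ∀ b : ℤ, (S ∩ Set.Icc 1 b).Finite :=
      fun b => (Set.finite_Icc 1 b).subset inter_subset_right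
    set t : Finset ℤ := (hSfin ((N:ℤ) + M)).toFinset with ht
    have hmaps : ∀ n ∈ Finset.Icc n1 N, f n ∈ t := by
      intro n hn
      rw [Finset.mem_Icc] at hn
      obtain ⟨hfS, hfb⟩ := hf n hn.1
      rw [abs_le] at hfb
      have hMn1 : (M:ℤ) + 1 ≤ (n1:ℤ) := by exact_mod_cast Nat.succ_le_of_lt (Nat.lt_of_lt_of_le (Nat.lt_succ_self M) (le_max_right n0 (M+1)))
      have hn1n : (n1:ℤ) ≤ (n:ℤ) := by exact_mod_cast hn.1
      have hnN : (n:ℤ) ≤ (N:ℤ) := by exact_mod_cast hn.2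
      rw [ht, Set.Finite.mem_toFinset]
      exact ⟨hfS, by constructor <;> linarith⟩
    have hfiber : ∀ a ∈ t, ((Finset.Icc n1 N).filter (fun n => f n = a)).card ≤ 2*M+1 := by
      intro a _
      have hinj : ∀ n ∈ (Finset.Icc n1 N).filter (fun n => f n = a), (n:ℤ) ∈ Finset.Icc (a - M) (a + M) := by
        intro n hn
        rw [Finset.mem_filter, Finset.mem_Icc] at hn
        obtain ⟨⟨hn1n, _⟩, hfa⟩ := hn
        have := (hf n hn1n).2
        rw [hfa, abs_le] at this
        rw [Finset.mem_Icc]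
        constructor <;> linarith [this.1, this.2]
      calc ((Finset.Icc n1 N).filter (fun n => f n = a)).card
          ≤ (Finset.Icc (a - M) (a + M)).card :=
            Finset.card_le_card_of_injOn (fun n => (n:ℤ)) hinj
              (fun x _ y _ hxy => by exact Nat.cast_injective hxy)
        _ = 2*M+1 := by rw [Int.card_Icc]; omega
    have hcard : (Finset.Icc n1 N).card ≤ (2*M+1) * t.card :=
      Finset.card_le_mul_card_image_of_maps_to hmaps (2*M+1) hfiber
    have htcard : t.card ≤ (S ∩ Set.Icc 1 (N:ℤ)).ncard + M := by
      have hsub : t ⊆ (hSfin (N:ℤ)).toFinset ∪ Finset.Icc ((N:ℤ)+1) ((N:ℤ)+M) := by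
        intro a ha
        rw [ht, Set.Finite.mem_toFinset] at ha
        obtain ⟨haS, ha1, haN⟩ := ha
        rw [Finset.mem_union, Set.Finite.mem_toFinset, Finset.mem_Icc]
        by_cases hle : a ≤ (N:ℤ)
        · exact Or.inl ⟨haS, ha1, hle⟩
        · exact Or.inr ⟨by linarith, haN⟩
      calc t.card ≤ ((hSfin (N:ℤ)).toFinset ∪ Finset.Icc ((N:ℤ)+1) ((N:ℤ)+M)).card :=
            Finset.card_le_card hsub
        _ ≤ (hSfin (N:ℤ)).toFinset.card + (Finset.Icc ((N:ℤ)+1) ((N:ℤ)+M)).card :=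
            Finset.card_union_le _ _
        _ = (S ∩ Set.Icc 1 (N:ℤ)).ncard + M := by
            rw [Set.ncard_eq_toFinset_card _ (hSfin (N:ℤ)), Int.card_Icc]
            congr 1
            omega
    have hc : (Finset.Icc n1 N).card = N + 1 - n1 := by rw [Nat.card_Icc]
    rw [← hc]
    exact hcard.trans (Nat.mul_le_mul_left _ htcard)
  -- final limit argument
  have hMR : (M:ℝ) = (h:ℝ) * μ := by exact_mod_cast hMcast
  have hposM : (0:ℝ) < 2*(M:ℝ)+1 := by positivity
  set g : ℕ → ℝ := fun n => (((n:ℝ) + 1 - n1) - (M:ℝ)*(2*(M:ℝ)+1)) / ((2*(M:ℝ)+1) * n) with hg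
  have hgt : Tendsto g atTop (nhds (1/(2*(M:ℝ)+1))) := by
    have h1 : ∀ n : ℕ, 1 ≤ n → g n =
        (1/(2*(M:ℝ)+1)) * 1 + (((1:ℝ) - n1 - (M:ℝ)*(2*(M:ℝ)+1)) / (2*(M:ℝ)+1)) / n := by
      intro n hn
      have hnR : (0:ℝ) < n := by exact_mod_cast hn
      rw [hg]
      field_simp
      ring
    have t1 : Tendsto (fun n : ℕ =>
        (1/(2*(M:ℝ)+1)) * 1 + (((1:ℝ) - n1 - (M:ℝ)*(2*(M:ℝ)+1)) / (2*(M:ℝ)+1)) / n)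
        atTop (nhds ((1/(2*(M:ℝ)+1)) * 1 + 0)) :=
      tendsto_const_nhds.add
        (Filter.Tendsto.div_atTop tendsto_const_nhds tendsto_natCast_atTop_atTop)
    have t2 : Tendsto g atTop (nhds ((1/(2*(M:ℝ)+1)) * 1 + 0)) := by
      apply t1.congr'
      filter_upwards [eventually_ge_atTop 1] with n hn
      exact (h1 n hn).symm
    simpa using t2
  have hlb : ∀ᶠ n : ℕ in atTop, g n ≤ ((S ∩ Set.Icc 1 (n:ℤ)).ncard : ℝ) / n := by
    filter_upwards [eventually_ge_atTop (max n1 1)] with n hn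
    have hn1n : n1 ≤ n := le_trans (le_max_left _ _) hn
    have hn1 : 1 ≤ n := le_trans (le_max_right _ _) hn
    have hnR : (0:ℝ) < n := by exact_mod_cast hn1
    have hkey := key n hn1n
    set c : ℝ := ((S ∩ Set.Icc 1 (n:ℤ)).ncard : ℝ) with hc
    have hkeyR : (n:ℝ) + 1 - n1 ≤ (2*(M:ℝ)+1) * (c + M) := by
      have h2 : ((n + 1 - n1 : ℕ) : ℝ) ≤ (((2*M+1) * ((S ∩ Set.Icc 1 (n:ℤ)).ncard + M) : ℕ) : ℝ) := by
        exact_mod_cast hkey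
      rw [Nat.cast_sub (by omega)] at h2
      push_cast at h2
      linarith
    rw [hg, div_le_div_iff₀ (by positivity) hnR]
    calc (((n:ℝ) + 1 - n1) - (M:ℝ)*(2*(M:ℝ)+1)) * n
        ≤ ((2*(M:ℝ)+1) * c) * n := by
          apply mul_le_mul_of_nonneg_right _ hnR.le
          nlinarith [hkeyR]
      _ = c * ((2*(M:ℝ)+1) * n) := by ring
  have hcn : ∀ n : ℕ, (S ∩ Set.Icc 1 (n:ℤ)).ncard ≤ n := by
    intro n
    have h1 : (S ∩ Set.Icc 1 (n:ℤ)).ncard ≤ (Set.Icc 1 (n:ℤ)).ncard :=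
      Set.ncard_le_ncard inter_subset_right (Set.finite_Icc 1 (n:ℤ))
    have h2 : (Set.Icc 1 (n:ℤ)).ncard = n := by
      rw [← Finset.coe_Icc, Set.ncard_coe_finset, Int.card_Icc]
      omega
    omega
  have hcobdd : IsCoboundedUnder (· ≥ ·) atTop
      (fun n : ℕ => ((S ∩ Set.Icc 1 (n:ℤ)).ncard : ℝ) / n) := by
    apply Filter.IsBoundedUnder.isCoboundedUnder_ge
    refine isBoundedUnder_of ⟨1, fun n => ?_⟩
    rcases Nat.eq_zero_or_pos n with hn | hn
    · simp [hn]
    · have hnR : (0:ℝ) < n := by exact_mod_cast hn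
      rw [div_le_one hnR]
      exact_mod_cast hcn n
  rw [lowerDensity]
  have heq : 2 * (h:ℝ) * (μ:ℝ) + 1 = 2*(M:ℝ)+1 := by rw [hMR]; ring
  rw [heq]
  calc 1/(2*(M:ℝ)+1) = liminf g atTop := hgt.liminf_eq.symm
    _ ≤ _ := liminf_le_liminf hlb hgt.isBoundedUnder_ge hcobdd
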